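/- arXiv:1202.1122 — 2 statements merged into one kernel-verified Lean document; each statement's English description precedes it below -/
import Mathlib

section
/- Relative Poincaré lemma for quasi-homogeneous ideals: Let I be a finitely generated quasi-homogeneous ideal in the ring of C-analytic function-germs on (C^m,0), i.e., I is generated by function-germs f₁,…,f_k that are quasi-homogeneous in a common coordinate system with common positive integer weights. If ω is a germ of a closed p-form lying in I·Λ^p(C^m) (that is, ω = Σ g_i α_i with g_i ∈ I and α_i p-forms), then there exists a (p−1)-form germ α ∈ I·Λ^{p−1}(C^m) with ω = dα. -/
open Filter Topology

set_option maxHeartbeats 1000000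
set_option synthInstance.maxHeartbeats 400000

noncomputable section

/-- The space `ℂ^m`. -/
abbrev Cm (m : ℕ) := Fin m → ℂ

/-- Model of the ring of `ℂ`-analytic function-germs at `0` on `ℂ^m`:
functions that are analytic at `0`. -/
def AnalyticGermRing (m : ℕ) : Subalgebra ℂ (Cm m → ℂ) where
  carrier := {f | AnalyticAt ℂ f 0}
  mul_mem' := fun hf hg => hf.mul hg
  add_mem' := fun hf hg => hf.add hg
  algebraMap_mem' := fun _ => analyticAt_const

/-- `O m` : the ring of analytic function-germs at `0 ∈ ℂ^m` (model). -/
abbrev O (m : ℕ) := AnalyticGermRing m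

theorem coord_analyticAt (m : ℕ) (i : Fin m) (x : Cm m) :
    AnalyticAt ℂ (fun y : Cm m => y i) x :=
  (ContinuousLinearMap.proj (R := ℂ) (φ := fun _ : Fin m => ℂ) i).analyticAt x

/-- The `i`-th coordinate function as an analytic germ. -/
def coordO (m : ℕ) (i : Fin m) : O m := ⟨fun y => y i, coord_analyticAt m i 0⟩

/-- Partial derivative `∂/∂x_i` on analytic germs. -/
def pd {m : ℕ} (i : Fin m) (f : O m) : O m :=
  ⟨fun x => fderiv ℂ (f : Cm m → ℂ) x (Pi.single i 1), by
    have h1 : AnalyticAt ℂ (fderiv ℂ (f : Cm m → ℂ)) 0 := f.2.fderiv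
    have h2 := (ContinuousLinearMap.apply ℂ ℂ (Pi.single i 1 : Cm m)).analyticAt
      (fderiv ℂ (f : Cm m → ℂ) 0)
    exact h2.comp h1⟩

/-- Germs of analytic differential `p`-forms on `ℂ^m`, given by their
coefficient family: `ω J` is the coefficient of `dx_{J 0} ⊗ ⋯ ⊗ dx_{J (p-1)}`. -/
abbrev Form (m p : ℕ) := (Fin p → Fin m) → O m

/-- A form is alternating: coefficients vanish on non-injective indices and are
antisymmetric under permutations. -/
def IsAlt {m p : ℕ} (ω : Form m p) : Prop :=
  (∀ J : Fin p → Fin m, ¬ Function.Injective J → ω J = 0) ∧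
  ∀ (J : Fin p → Fin m) (σ : Equiv.Perm (Fin p)),
    ω (J ∘ σ) = ((Equiv.Perm.sign σ : ℤ) : ℂ) • ω J

/-- Exterior derivative on coefficient families. -/
def extD {m p : ℕ} (ω : Form m p) : Form m (p + 1) :=
  fun J => ∑ i : Fin (p + 1), ((-1 : ℂ) ^ (i : ℕ)) • pd (J i) (ω (J ∘ i.succAbove))

/-- Exterior derivative from degree `p-1` to degree `p` (zero in degree `0`). -/
def dLow {m : ℕ} : {p : ℕ} → Form m (p - 1) → Form m p
  | 0, _ => 0
  | _ + 1, β => extD β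

/-- `ω ∈ I·Λ^p`: all coefficients lie in the ideal `I`. -/
def memIF {m p : ℕ} (I : Ideal (O m)) (ω : Form m p) : Prop := ∀ J, ω J ∈ I

/-- Equality of forms as germs at `0`. -/
def FormEq {m p : ℕ} (ω₁ ω₂ : Form m p) : Prop :=
  ∀ J, ((ω₁ J : Cm m → ℂ)) =ᶠ[𝓝 (0 : Cm m)] (ω₂ J : Cm m → ℂ)

/-- `ω` has zero algebraic restriction to `I`:
`ω = α + dβ` with `α ∈ I·Λ^p`, `β ∈ I·Λ^{p-1}`. -/
def ZeroAR {m p : ℕ} (I : Ideal (O m)) (ω : Form m p) : Prop :=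
  ∃ (α : Form m p) (β : Form m (p - 1)),
    memIF I α ∧ memIF I β ∧ FormEq ω (α + dLow β)

/-- Interior product with a vector field. -/
def iprod {m : ℕ} (X : Fin m → O m) : {p : ℕ} → Form m p → Form m (p - 1)
  | 0, _ => 0
  | _ + 1, ω => fun J => ∑ k : Fin m, X k * ω (Fin.cons k J)

/-- Lie derivative of a form along a vector field (Cartan's formula). -/
def lieD {m p : ℕ} (X : Fin m → O m) (ω : Form m p) : Form m p :=
  dLow (iprod X ω) + (show Form m p from iprod X (extD ω))

/-- Wedge product of forms (on coefficient families, with the usual normalization). -/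
def wedge {m p q : ℕ} (ω : Form m p) (γ : Form m q) : Form m (p + q) :=
  ((p.factorial * q.factorial : ℂ))⁻¹ •
    (fun K => ∑ σ : Equiv.Perm (Fin (p + q)),
      ((Equiv.Perm.sign σ : ℤ) : ℂ) •
        (ω (fun i => K (σ (Fin.castAdd q i))) * γ (fun j => K (σ (Fin.natAdd p j)))))

/-- Coefficient family of the pullback `Φ^*ω` (as plain functions). -/
def pullFunForm {k m p : ℕ} (Φ : Cm k → Cm m) (ω : Form m p) :
    (Fin p → Fin k) → Cm k → ℂ :=
  fun J x => ∑ K : Fin p → Fin m,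
    (ω K : Cm m → ℂ) (Φ x) *
      ∏ i : Fin p, fderiv ℂ (fun y => Φ y (K i)) x (Pi.single (J i) 1)

/-- The analytic form `ω'` represents the coefficient family `c` (as germs at `0`). -/
def Represents {k p : ℕ} (ω' : Form k p) (c : (Fin p → Fin k) → Cm k → ℂ) : Prop :=
  ∀ J, (ω' J : Cm k → ℂ) =ᶠ[𝓝 (0 : Cm k)] c J

/-- `Φ^*I = I` : `f ∈ I` iff `f ∘ Φ` is (the germ of) an element of `I`. -/
def PreservesIdeal {m : ℕ} (Φ : Cm m → Cm m) (I : Ideal (O m)) : Prop :=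
  ∀ f : O m, f ∈ I ↔
    ∃ g ∈ I, (g : Cm m → ℂ) =ᶠ[𝓝 (0 : Cm m)] fun x => (f : Cm m → ℂ) (Φ x)

/-- A diffeomorphism-germ of `(ℂ^m, 0)` (model). -/
structure LocalDiffeo (m : ℕ) where
  toFun : Cm m → Cm m
  invFun : Cm m → Cm m
  an : AnalyticAt ℂ toFun 0
  map_zero : toFun 0 = 0
  left_inv : ∀ᶠ x in 𝓝 (0 : Cm m), invFun (toFun x) = x
  right_inv : ∀ᶠ x in 𝓝 (0 : Cm m), toFun (invFun x) = x

/-- The algebraic restrictions `[ω₁]_I` and `[ω₂]_I` are diffeomorphic (via a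
diffeomorphism-germ preserving `I`). -/
def ARDiffeomorphic {m p : ℕ} (I : Ideal (O m)) (ω₁ ω₂ : Form m p) : Prop :=
  ∃ Φ : LocalDiffeo m, PreservesIdeal Φ.toFun I ∧
    ∀ ω' : Form m p, Represents ω' (pullFunForm Φ.toFun ω₂) → ZeroAR I (ω' - ω₁)

/-- The Euler vector field `Σ λ_i x_i ∂/∂x_i`. -/
def eulerVF (m : ℕ) (lam : Fin m → ℕ) : Fin m → O m :=
  fun i => ((lam i : ℂ)) • coordO m i

/-- The coordinate `y` on `ℂ²`. -/
def Y : O 2 := coordO 2 0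
/-- The coordinate `z` on `ℂ²`. -/
def Z : O 2 := coordO 2 1

/-- The 1-form `g dy + h dz` on `ℂ²`. -/
def oneF (g h : O 2) : Form 2 1 := fun J => if J 0 = 0 then g else h

/-- The 2-form `f dy ∧ dz` on `ℂ²`. -/
def twoF (f : O 2) : Form 2 2 :=
  fun J => if J 0 = 0 ∧ J 1 = 1 then f else if J 0 = 1 ∧ J 1 = 0 then -f else 0


/-!
The Euler field `E = Σ λⱼ xⱼ ∂ⱼ` generates the contractions `Φₜ x = (t^{λⱼ} xⱼ)ⱼ`, `0 ≤ t ≤ 1`,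
with `d/dt Φₜ^* = t⁻¹ Φₜ^* L_E`. For closed `ω`, Cartan's formula gives `L_E ω = d ι_E ω`, so
integrating over `[0, 1]` yields `ω = d α` with `α = ∫₀¹ t⁻¹ Φₜ^*(ι_E ω) dt`; the coefficients of
`α` are analytic at `0` because the power series of those of `ω` may be integrated term by term.
If the coefficients of `ω` are `Σᵢ gᵢ fᵢ` with `fᵢ ∘ Φₜ = t^{δᵢ} fᵢ`, every `fᵢ` comes out of the
integral, so `α ∈ I·Λ^{p-1}`.
-/

section RelativePoincare

open Metric MeasureTheory Set

section PullbackIntegral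

variable {E : Type*} [NormedAddCommGroup E] [NormedSpace ℂ E]

def pullbackIntegral (u : ℝ → E →L[ℂ] E) (a : ℕ) (g : E → ℂ) (x : E) : ℂ :=
  ∫ t in (0:ℝ)..1, (t : ℂ) ^ a * g (u t x)

lemma uIoc_zero_one_subset_Icc : uIoc (0:ℝ) 1 ⊆ Icc 0 1 := by
  rw [uIoc_of_le zero_le_one]
  exact Ioc_subset_Icc_self

lemma norm_ofReal_pow_le_one {t : ℝ} (ht : t ∈ Icc (0:ℝ) 1) (a : ℕ) : ‖(t : ℂ) ^ a‖ ≤ 1 := by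
  rw [norm_pow, Complex.norm_real, Real.norm_of_nonneg ht.1]
  exact pow_le_one₀ ht.1 ht.2

lemma norm_apply_le_of_norm_le_one {u : E →L[ℂ] E} (hu : ‖u‖ ≤ 1) (x : E) : ‖u x‖ ≤ ‖x‖ :=
  (u.le_of_opNorm_le hu x).trans_eq (one_mul _)

lemma apply_mem_ball_of_norm_le_one {u : E →L[ℂ] E} (hu : ‖u‖ ≤ 1) {R : ℝ} {x : E}
    (hx : x ∈ ball 0 R) : u x ∈ ball 0 R := by
  rw [mem_ball_zero_iff] at hx ⊢
  exact (norm_apply_le_of_norm_le_one hu x).trans_lt hx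

lemma continuousOn_pow_mul_comp {u : ℝ → E →L[ℂ] E} (hu : Continuous u)
    (hu1 : ∀ t ∈ Icc (0:ℝ) 1, ‖u t‖ ≤ 1) {R : ℝ} {g : E → ℂ} (hg : ContinuousOn g (ball 0 R))
    {x : E} (hx : x ∈ ball 0 R) (a : ℕ) :
    ContinuousOn (fun t : ℝ => (t : ℂ) ^ a * g (u t x)) (Icc 0 1) :=
  (Complex.continuous_ofReal.pow a).continuousOn.mul <|
    hg.comp (hu.clm_apply continuous_const).continuousOn
      fun t ht => apply_mem_ball_of_norm_le_one (hu1 t ht) hx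

lemma intervalIntegrable_pow_mul_comp {u : ℝ → E →L[ℂ] E} (hu : Continuous u)
    (hu1 : ∀ t ∈ Icc (0:ℝ) 1, ‖u t‖ ≤ 1) {R : ℝ} {g : E → ℂ} (hg : ContinuousOn g (ball 0 R))
    {x : E} (hx : x ∈ ball 0 R) (a : ℕ) :
    IntervalIntegrable (fun t : ℝ => (t : ℂ) ^ a * g (u t x)) volume 0 1 :=
  (continuousOn_pow_mul_comp hu hu1 hg hx a).intervalIntegrable_of_Icc zero_le_one

lemma pullbackIntegral_const_mul (u : ℝ → E →L[ℂ] E) (a : ℕ) (c : ℂ) (g : E → ℂ) (x : E) :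
    pullbackIntegral u a (fun y => c * g y) x = c * pullbackIntegral u a g x := by
  rw [pullbackIntegral, pullbackIntegral, ← intervalIntegral.integral_const_mul]
  congr 1
  ext t
  ring

lemma pullbackIntegral_sum {ι : Type*} (s : Finset ι) {u : ℝ → E →L[ℂ] E} (hu : Continuous u)
    (hu1 : ∀ t ∈ Icc (0:ℝ) 1, ‖u t‖ ≤ 1) {R : ℝ} {g : ι → E → ℂ}
    (hg : ∀ i ∈ s, ContinuousOn (g i) (ball 0 R)) {x : E} (hx : x ∈ ball 0 R) (a : ℕ) :
    pullbackIntegral u a (fun y => ∑ i ∈ s, g i y) x = ∑ i ∈ s, pullbackIntegral u a (g i) x := by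
  simp only [pullbackIntegral, Finset.mul_sum]
  exact intervalIntegral.integral_finsetSum fun i hi =>
    intervalIntegrable_pow_mul_comp hu hu1 (hg i hi) hx a

lemma pullbackIntegral_congr (u : ℝ → E →L[ℂ] E) (hu1 : ∀ t ∈ Icc (0:ℝ) 1, ‖u t‖ ≤ 1)
    (a : ℕ) {R : ℝ} {g h : E → ℂ} (hgh : EqOn g h (ball 0 R)) {x : E} (hx : x ∈ ball 0 R) :
    pullbackIntegral u a g x = pullbackIntegral u a h x := by
  refine intervalIntegral.integral_congr fun t ht => ?_
  rw [uIcc_of_le zero_le_one] at ht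
  simp only [hgh (apply_mem_ball_of_norm_le_one (hu1 t ht) hx)]

/-- The power series of `pullbackIntegral u a g` at `0`, where `p` is that of `g`. -/
def pullbackIntegralSeries (u : ℝ → E →L[ℂ] E) (a : ℕ) (p : FormalMultilinearSeries ℂ E ℂ) :
    FormalMultilinearSeries ℂ E ℂ := fun n =>
  ∫ t in (0:ℝ)..1, (t : ℂ) ^ a • (p n).compContinuousLinearMap fun _ => u t

lemma norm_pullbackIntegralSeries_le {u : ℝ → E →L[ℂ] E} (hu1 : ∀ t ∈ Icc (0:ℝ) 1, ‖u t‖ ≤ 1)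
    (a : ℕ) (p : FormalMultilinearSeries ℂ E ℂ) (n : ℕ) :
    ‖pullbackIntegralSeries u a p n‖ ≤ ‖p n‖ := by
  have hbound : ∀ t ∈ uIoc (0:ℝ) 1,
      ‖(t : ℂ) ^ a • (p n).compContinuousLinearMap fun _ => u t‖ ≤ ‖p n‖ := fun t ht => by
    have ht' := uIoc_zero_one_subset_Icc ht
    calc _ ≤ 1 * (‖p n‖ * ∏ _i : Fin n, ‖u t‖) := by
          rw [norm_smul]
          exact mul_le_mul (norm_ofReal_pow_le_one ht' a)
            ((p n).norm_compContinuousLinearMap_le _) (norm_nonneg _) zero_le_one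
      _ ≤ ‖p n‖ * 1 := by
          rw [one_mul]
          gcongr
          exact Finset.prod_le_one (fun _ _ => norm_nonneg _) fun _ _ => hu1 t ht'
      _ = ‖p n‖ := mul_one _
  simpa [pullbackIntegralSeries] using intervalIntegral.norm_integral_le_of_norm_le_const hbound

lemma pullbackIntegralSeries_apply {u : ℝ → E →L[ℂ] E} (hu : Continuous u) (a : ℕ)
    (p : FormalMultilinearSeries ℂ E ℂ) (n : ℕ) (v : Fin n → E) :
    pullbackIntegralSeries u a p n v = ∫ t in (0:ℝ)..1, (t : ℂ) ^ a * p n fun i => u t (v i) := by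
  have hcont : Continuous fun t : ℝ => (t : ℂ) ^ a • (p n).compContinuousLinearMap fun _ => u t :=
    (Complex.continuous_ofReal.pow a).smul <|
      ((ContinuousMultilinearMap.compContinuousLinearMapContinuousMultilinear ℂ
        (fun _ : Fin n => E) (fun _ => E) ℂ).coe_continuous.comp
          (continuous_pi fun _ => hu)).clm_apply continuous_const
  exact ((ContinuousMultilinearMap.apply ℂ _ ℂ v).intervalIntegral_comp_comm
    (hcont.intervalIntegrable 0 1)).symm

theorem analyticAt_pullbackIntegral {u : ℝ → E →L[ℂ] E} (hu : Continuous u)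
    (hu1 : ∀ t ∈ Icc (0:ℝ) 1, ‖u t‖ ≤ 1) (a : ℕ) {g : E → ℂ} (hg : AnalyticAt ℂ g 0) :
    AnalyticAt ℂ (pullbackIntegral u a g) 0 := by
  obtain ⟨p, ρ, hp⟩ := hg
  obtain ⟨r, hr0, hrρ⟩ := ENNReal.lt_iff_exists_nnreal_btwn.mp hp.r_pos
  have hsummable : ∀ y : E, ‖y‖₊ < r → Summable fun n => ‖p n‖ * ‖y‖ ^ n := fun y hy =>
    p.summable_norm_mul_pow (r := ‖y‖₊)
      ((ENNReal.coe_lt_coe.mpr hy).trans (hrρ.trans_le hp.r_le))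
  refine ⟨pullbackIntegralSeries u a p, r, ?_, hr0, fun {y} hy => ?_⟩
  · refine FormalMultilinearSeries.le_radius_of_summable_norm _ <|
      (p.summable_norm_mul_pow (hrρ.trans_le hp.r_le)).of_nonneg_of_le
        (fun n => by positivity) fun n => ?_
    gcongr
    exact norm_pullbackIntegralSeries_le hu1 a p n
  rw [mem_eball_zero_iff, enorm_eq_nnnorm, ENNReal.coe_lt_coe] at hy
  simp only [zero_add, pullbackIntegralSeries_apply hu]
  refine intervalIntegral.hasSum_integral_of_dominated_convergence
    (fun n _ => ‖p n‖ * ‖y‖ ^ n) (fun n => ?_) (fun n => ae_of_all _ fun t ht => ?_)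
    (ae_of_all _ fun _ _ => hsummable y hy) intervalIntegrable_const
    (ae_of_all _ fun t ht => ?_)
  · exact (((Complex.continuous_ofReal.pow a).mul <| (p n).cont.comp <|
      continuous_pi fun _ => hu.clm_apply continuous_const).aestronglyMeasurable)
  · have ht' := uIoc_zero_one_subset_Icc ht
    calc ‖(t : ℂ) ^ a * p n fun _ => u t y‖ ≤ 1 * (‖p n‖ * ∏ _i : Fin n, ‖u t y‖) :=
          norm_mul_le_of_le (norm_ofReal_pow_le_one ht' a) ((p n).le_opNorm _)
      _ ≤ ‖p n‖ * ‖y‖ ^ n := by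
          rw [one_mul, Finset.prod_const, Finset.card_fin]
          gcongr
          exact norm_apply_le_of_norm_le_one (hu1 t ht') y
  · have huy : ‖u t y‖₊ < ρ := by
      refine lt_of_le_of_lt ?_ ((ENNReal.coe_lt_coe.mpr hy).trans hrρ)
      exact ENNReal.coe_le_coe.mpr
        (norm_apply_le_of_norm_le_one (hu1 t (uIoc_zero_one_subset_Icc ht)) y)
    have hmem : u t y ∈ eball 0 ρ := mem_eball_zero_iff.mpr (by simpa [enorm_eq_nnnorm])
    simpa using (hp.hasSum hmem).mul_left ((t : ℂ) ^ a)

lemma continuousOn_pow_smul_fderiv_comp {u : ℝ → E →L[ℂ] E} (hu : Continuous u)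
    (hu1 : ∀ t ∈ Icc (0:ℝ) 1, ‖u t‖ ≤ 1) (a : ℕ) {R : ℝ} {g : E → ℂ}
    (hg : AnalyticOnNhd ℂ g (ball 0 R)) {x : E} (hx : x ∈ ball 0 R) :
    ContinuousOn (fun t : ℝ => (t : ℂ) ^ a • (fderiv ℂ g (u t x)).comp (u t)) (Icc 0 1) :=
  (Complex.continuous_ofReal.pow a).continuousOn.smul <|
    (hg.fderiv.continuousOn.comp (hu.clm_apply continuous_const).continuousOn
      fun t ht => apply_mem_ball_of_norm_le_one (hu1 t ht) hx).clm_comp hu.continuousOn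

theorem hasFDerivAt_pullbackIntegral [ProperSpace E] {u : ℝ → E →L[ℂ] E} (hu : Continuous u)
    (hu1 : ∀ t ∈ Icc (0:ℝ) 1, ‖u t‖ ≤ 1) (a : ℕ) {R : ℝ} {g : E → ℂ}
    (hg : AnalyticOnNhd ℂ g (ball 0 R)) {x : E} (hx : x ∈ ball 0 R) :
    HasFDerivAt (pullbackIntegral u a g)
      (∫ t in (0:ℝ)..1, (t : ℂ) ^ a • (fderiv ℂ g (u t x)).comp (u t)) x := by
  obtain ⟨ρ, hxρ, hρR⟩ := exists_between (mem_ball_zero_iff.mp hx)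
  have hnhds : ball x (ρ - ‖x‖) ∈ 𝓝 x := ball_mem_nhds x (sub_pos.mpr hxρ)
  have hsub : ball x (ρ - ‖x‖) ⊆ ball 0 ρ := fun y hy => by
    rw [mem_ball_zero_iff]
    linarith [mem_ball_iff_norm.mp hy, norm_sub_norm_le y x]
  have hsubR : ball (0 : E) ρ ⊆ ball 0 R := ball_subset_ball hρR.le
  obtain ⟨M, hM⟩ := (isCompact_closedBall (0 : E) ρ).exists_bound_of_continuousOn
    (hg.fderiv.continuousOn.mono (closedBall_subset_ball hρR))
  refine intervalIntegral.hasFDerivAt_integral_of_dominated_of_fderiv_le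
    (𝕜 := ℂ) (F := fun y t => (t : ℂ) ^ a * g (u t y))
    (F' := fun y t => (t : ℂ) ^ a • (fderiv ℂ g (u t y)).comp (u t)) (bound := fun _ => M)
    hnhds ?_ (intervalIntegrable_pow_mul_comp hu hu1 hg.continuousOn hx a)
    ?_ (ae_of_all _ fun t ht y hy => ?_) intervalIntegrable_const
    (ae_of_all _ fun t ht y hy => ?_)
  · filter_upwards [hnhds] with y hy
    exact ((continuousOn_pow_mul_comp hu hu1 hg.continuousOn (hsubR (hsub hy)) a).mono
      uIoc_zero_one_subset_Icc).aestronglyMeasurable measurableSet_uIoc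
  · exact ((continuousOn_pow_smul_fderiv_comp hu hu1 a hg hx).mono
      uIoc_zero_one_subset_Icc).aestronglyMeasurable measurableSet_uIoc
  · have ht' := uIoc_zero_one_subset_Icc ht
    have hmem : u t y ∈ closedBall 0 ρ :=
      ball_subset_closedBall (apply_mem_ball_of_norm_le_one (hu1 t ht') (hsub hy))
    calc ‖(t : ℂ) ^ a • (fderiv ℂ g (u t y)).comp (u t)‖
        ≤ 1 * (M * 1) := by
          rw [norm_smul]
          refine mul_le_mul (norm_ofReal_pow_le_one ht' a) ?_ (norm_nonneg _) zero_le_one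
          exact (ContinuousLinearMap.opNorm_comp_le _ _).trans
            (mul_le_mul (hM _ hmem) (hu1 t ht') (norm_nonneg _) ((norm_nonneg _).trans (hM _ hmem)))
      _ = M := by ring
  · have hmem :=
      apply_mem_ball_of_norm_le_one (hu1 t (uIoc_zero_one_subset_Icc ht)) (hsubR (hsub hy))
    exact (((hg _ hmem).differentiableAt.hasFDerivAt).comp y (u t).hasFDerivAt).const_mul _

end PullbackIntegral

variable {m : ℕ}

/-- `Φₜ x = (t^{λⱼ} xⱼ)ⱼ`, the flow of the Euler field `Σ λⱼ xⱼ ∂ⱼ` at time `log t`. -/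
def dilation (lam : Fin m → ℕ) (t : ℝ) : Cm m →L[ℂ] Cm m :=
  ContinuousLinearMap.pi fun j => ((t : ℂ) ^ lam j) • ContinuousLinearMap.proj j

@[simp] lemma dilation_apply (lam : Fin m → ℕ) (t : ℝ) (x : Cm m) (j : Fin m) :
    dilation lam t x j = (t : ℂ) ^ lam j * x j := rfl

@[simp] lemma dilation_one_apply (lam : Fin m → ℕ) (x : Cm m) : dilation lam 1 x = x := by
  ext j
  simp

lemma continuous_dilation (lam : Fin m → ℕ) : Continuous (dilation lam) :=
  (ContinuousLinearMap.piEquivL ℂ (Cm m) fun _ => ℂ).continuous.comp <|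
    continuous_pi fun _ => (Complex.continuous_ofReal.pow _).smul continuous_const

lemma norm_dilation_le_one (lam : Fin m → ℕ) : ∀ t ∈ Icc (0:ℝ) 1, ‖dilation lam t‖ ≤ 1 := by
  intro t ht
  refine ContinuousLinearMap.opNorm_le_bound _ zero_le_one fun x => ?_
  rw [one_mul, pi_norm_le_iff_of_nonneg (norm_nonneg x)]
  intro j
  rw [dilation_apply, norm_mul]
  exact (mul_le_of_le_one_left (norm_nonneg _) (norm_ofReal_pow_le_one ht _)).trans
    (norm_le_pi_norm x j)

lemma dilation_single (lam : Fin m → ℕ) (t : ℝ) (j : Fin m) :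
    dilation lam t (Pi.single j 1) = (t : ℂ) ^ lam j • Pi.single j 1 := by
  ext i
  rcases eq_or_ne i j with rfl | h
  · simp
  · simp [h]

lemma clm_apply_eq_sum_single (L : Cm m →L[ℂ] ℂ) (v : Cm m) :
    L v = ∑ j, v j * L (Pi.single j 1) := by
  conv_lhs => rw [← Finset.univ_sum_single v]
  simp only [map_sum]
  refine Finset.sum_congr rfl fun j _ => ?_
  rw [← smul_eq_mul, ← map_smul, ← Pi.single_smul', smul_eq_mul, mul_one]

lemma hasDerivAt_dilation_apply (lam : Fin m → ℕ) (x : Cm m) (t : ℝ) :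
    HasDerivAt (fun s => dilation lam s x) (fun j => (lam j : ℂ) * (t : ℂ) ^ (lam j - 1) * x j) t :=
  hasDerivAt_pi.mpr fun j => ((hasDerivAt_pow (lam j) (t : ℂ)).mul_const (x j)).comp_ofReal

lemma fderiv_pullbackIntegral_dilation_single (lam : Fin m → ℕ) (a : ℕ) {R : ℝ} {g : Cm m → ℂ}
    (hg : AnalyticOnNhd ℂ g (ball 0 R)) {x : Cm m} (hx : x ∈ ball 0 R) (j : Fin m) :
    fderiv ℂ (pullbackIntegral (dilation lam) a g) x (Pi.single j 1) =
      pullbackIntegral (dilation lam) (a + lam j) (fun y => fderiv ℂ g y (Pi.single j 1)) x := by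
  rw [(hasFDerivAt_pullbackIntegral (continuous_dilation lam) (norm_dilation_le_one lam) a hg
    hx).fderiv, ContinuousLinearMap.intervalIntegral_apply]
  · refine intervalIntegral.integral_congr fun t _ => ?_
    rw [smul_apply, ContinuousLinearMap.comp_apply, dilation_single, map_smul, smul_eq_mul,
      smul_eq_mul, pow_add]
    ring
  · exact (continuousOn_pow_smul_fderiv_comp (continuous_dilation lam) (norm_dilation_le_one lam)
      a hg hx).intervalIntegrable_of_Icc zero_le_one

lemma hasDerivAt_pow_succ_mul_comp_dilation (lam : Fin m → ℕ) (n : ℕ) {R : ℝ} {g : Cm m → ℂ}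
    (hg : AnalyticOnNhd ℂ g (ball 0 R)) {x : Cm m} (hx : x ∈ ball 0 R) {t : ℝ}
    (ht : t ∈ Icc (0:ℝ) 1) :
    HasDerivAt (fun s : ℝ => (s : ℂ) ^ (n + 1) * g (dilation lam s x))
      ((n + 1 : ℂ) * ((t : ℂ) ^ n * g (dilation lam t x)) + ∑ c, (lam c : ℂ) * x c *
        ((t : ℂ) ^ (n + lam c) * fderiv ℂ g (dilation lam t x) (Pi.single c 1))) t := by
  have hmem := apply_mem_ball_of_norm_le_one (norm_dilation_le_one lam t ht) hx
  have hcomp := ((hg _ hmem).differentiableAt.hasFDerivAt.restrictScalars ℝ).comp_hasDerivAt t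
    (hasDerivAt_dilation_apply lam x t)
  refine (((hasDerivAt_pow (n + 1) (t : ℂ)).comp_ofReal).mul hcomp).congr_deriv ?_
  simp only [ContinuousLinearMap.coe_restrictScalars']
  rw [clm_apply_eq_sum_single, Finset.mul_sum, Nat.add_sub_cancel, Function.comp_apply]
  push_cast
  congr 1
  · ring
  refine Finset.sum_congr rfl fun c _ => ?_
  -- `t^{n+1} · λ t^{λ-1} = λ t^{n+λ}`, also for `λ = 0` where `λ - 1` truncates
  generalize lam c = l
  cases l with
  | zero => simp
  | succ k => rw [Nat.add_sub_cancel]; push_cast; ring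

/-- The fundamental theorem of calculus for `t ↦ t^{n+1} g(Φₜ x)` on `[0, 1]`. -/
theorem eq_pullbackIntegral_dilation_euler (lam : Fin m → ℕ) (n : ℕ) {R : ℝ} {g : Cm m → ℂ}
    (hg : AnalyticOnNhd ℂ g (ball 0 R)) {x : Cm m} (hx : x ∈ ball 0 R) :
    g x = (n + 1 : ℂ) * pullbackIntegral (dilation lam) n g x +
      ∑ c, (lam c : ℂ) * x c *
        pullbackIntegral (dilation lam) (n + lam c) (fun y => fderiv ℂ g y (Pi.single c 1)) x := by
  have hpartial : ∀ c, ContinuousOn (fun y => fderiv ℂ g y (Pi.single c 1)) (ball 0 R) :=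
    fun c => hg.fderiv.continuousOn.clm_apply continuousOn_const
  have hint : ∀ (a : ℕ) {h : Cm m → ℂ}, ContinuousOn h (ball 0 R) →
      IntervalIntegrable (fun t : ℝ => (t : ℂ) ^ a * h (dilation lam t x)) volume 0 1 :=
    fun a _ hh =>
      intervalIntegrable_pow_mul_comp (continuous_dilation lam) (norm_dilation_le_one lam) hh hx a
  have hint_sum : ∀ c ∈ Finset.univ, IntervalIntegrable (fun t : ℝ => (lam c : ℂ) * x c *
      ((t : ℂ) ^ (n + lam c) * fderiv ℂ g (dilation lam t x) (Pi.single c 1))) volume 0 1 :=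
    fun c _ => (hint _ (hpartial c)).const_mul _
  have hsum := IntervalIntegrable.sum Finset.univ hint_sum
  rw [Finset.sum_fn] at hsum
  calc g x = ∫ t in (0:ℝ)..1, ((n + 1 : ℂ) * ((t : ℂ) ^ n * g (dilation lam t x)) +
      ∑ c, (lam c : ℂ) * x c *
        ((t : ℂ) ^ (n + lam c) * fderiv ℂ g (dilation lam t x) (Pi.single c 1))) := by
        rw [intervalIntegral.integral_eq_sub_of_hasDerivAt (fun t ht =>
          hasDerivAt_pow_succ_mul_comp_dilation lam n hg hx (by rwa [uIcc_of_le zero_le_one] at ht))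
          (((hint n hg.continuousOn).const_mul _).add hsum)]
        simp
    _ = _ := by
        rw [intervalIntegral.integral_add ((hint n hg.continuousOn).const_mul _)
            hsum, intervalIntegral.integral_finsetSum hint_sum]
        simp only [intervalIntegral.integral_const_mul, pullbackIntegral]

lemma coe_smul_eq_fun_mul (c : ℂ) (f : O m) :
    ((c • f : O m) : Cm m → ℂ) = fun x => c * (f : Cm m → ℂ) x := rfl

lemma coe_extD_apply {q : ℕ} (ω : Form m q) (K : Fin (q + 1) → Fin m) (x : Cm m) :
    (extD ω K : Cm m → ℂ) x =
      ∑ i : Fin (q + 1), (-1 : ℂ) ^ (i : ℕ) *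
        fderiv ℂ (ω (K ∘ i.succAbove) : Cm m → ℂ) x (Pi.single (K i) 1) := by
  simp [extD, pd]

lemma IsAlt.cons_succAbove {q : ℕ} {ω : Form m (q + 1)} (hω : IsAlt ω) (K : Fin (q + 1) → Fin m)
    (i : Fin (q + 1)) : ω (Fin.cons (K i) (K ∘ i.succAbove)) = (-1 : ℂ) ^ (i : ℕ) • ω K := by
  have h := hω.2 K i.cycleRange.symm
  change ω (Fin.cons (K i) (i.removeNth K)) = _
  rw [Equiv.Perm.sign_symm, Fin.sign_cycleRange] at h
  rw [← Fin.cons_removeNth_eq_comp_cycleRange_symm] at h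
  simpa using h

lemma fderiv_eq_sum_of_extD_cons_eq_zero {q : ℕ} (ω : Form m (q + 1)) (c : Fin m)
    (K : Fin (q + 1) → Fin m) {y : Cm m} (h : (extD ω (Fin.cons c K) : Cm m → ℂ) y = 0) :
    fderiv ℂ (ω K : Cm m → ℂ) y (Pi.single c 1) =
      ∑ i : Fin (q + 1), (-1 : ℂ) ^ (i : ℕ) *
        fderiv ℂ (ω (Fin.cons c (K ∘ i.succAbove)) : Cm m → ℂ) y (Pi.single (K i) 1) := by
  have hzero : (Fin.cons c K : Fin (q + 2) → Fin m) ∘ (0 : Fin (q + 2)).succAbove = K := by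
    ext j
    simp
  have hsucc : ∀ i : Fin (q + 1),
      (Fin.cons c K : Fin (q + 2) → Fin m) ∘ i.succ.succAbove = Fin.cons c (K ∘ i.succAbove) := by
    intro i
    ext j
    cases j using Fin.cases <;> simp [Fin.succ_succAbove_succ]
  rw [coe_extD_apply, Fin.sum_univ_succ] at h
  simp only [hzero, hsucc, Fin.cons_zero, Fin.cons_succ, Fin.val_zero, Fin.val_succ, pow_zero,
    one_mul, pow_succ, mul_neg_one, neg_mul, Finset.sum_neg_distrib] at h
  linear_combination h

lemma pullbackIntegral_fderiv_eq_sum_of_extD_eq_zero (lam : Fin m → ℕ) {q : ℕ}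
    {ω : Form m (q + 1)} {R : ℝ} (hω : ∀ L, AnalyticOnNhd ℂ (ω L : Cm m → ℂ) (ball 0 R))
    (hclosed : ∀ L, ∀ y ∈ ball 0 R, (extD ω L : Cm m → ℂ) y = 0) (K : Fin (q + 1) → Fin m)
    (c : Fin m) (a : ℕ) {x : Cm m} (hx : x ∈ ball 0 R) :
    pullbackIntegral (dilation lam) a (fun y => fderiv ℂ (ω K : Cm m → ℂ) y (Pi.single c 1)) x =
      ∑ i : Fin (q + 1), (-1 : ℂ) ^ (i : ℕ) * pullbackIntegral (dilation lam) a
        (fun y => fderiv ℂ (ω (Fin.cons c (K ∘ i.succAbove)) : Cm m → ℂ) y (Pi.single (K i) 1))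
        x := by
  simp only [← pullbackIntegral_const_mul]
  rw [← pullbackIntegral_sum _ (continuous_dilation lam) (norm_dilation_le_one lam) _ hx]
  · exact pullbackIntegral_congr _ (norm_dilation_le_one lam) _ (fun y hy =>
      fderiv_eq_sum_of_extD_cons_eq_zero ω c K (hclosed _ y hy)) hx
  · exact fun i _ => continuousOn_const.mul
      ((hω _).fderiv.continuousOn.clm_apply continuousOn_const)

def quasiDegree (lam : Fin m → ℕ) {q : ℕ} (J : Fin q → Fin m) : ℕ := ∑ l, lam (J l)

/-- The coefficient at `dx_J` of `∫₀¹ t⁻¹ Φₜ^*(ι_E ω) dt`, `E` the Euler field: `Φₜ^* x_c`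
contributes `t^{λ_c}` and `Φₜ^* dx_J` contributes `t^{quasiDegree J}`. -/
def homotopyCoeff (lam : Fin m → ℕ) {q : ℕ} (ω : Form m (q + 1)) (J : Fin q → Fin m)
    (x : Cm m) : ℂ :=
  ∑ c, (lam c : ℂ) * x c *
    pullbackIntegral (dilation lam) (quasiDegree lam J + lam c - 1) (ω (Fin.cons c J)) x

lemma fderiv_homotopyCoeff_single (lam : Fin m → ℕ) {q : ℕ} {ω : Form m (q + 1)} {R : ℝ}
    (hω : ∀ L, AnalyticOnNhd ℂ (ω L : Cm m → ℂ) (ball 0 R)) (J : Fin q → Fin m) {x : Cm m}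
    (hx : x ∈ ball 0 R) (j : Fin m) :
    fderiv ℂ (homotopyCoeff lam ω J) x (Pi.single j 1) =
      (lam j : ℂ) * pullbackIntegral (dilation lam) (quasiDegree lam J + lam j - 1)
          (ω (Fin.cons j J)) x +
        ∑ c, (lam c : ℂ) * x c * pullbackIntegral (dilation lam)
          (quasiDegree lam J + lam c - 1 + lam j)
          (fun y => fderiv ℂ (ω (Fin.cons c J) : Cm m → ℂ) y (Pi.single j 1)) x := by
  have hP : ∀ c, HasFDerivAt (pullbackIntegral (dilation lam) (quasiDegree lam J + lam c - 1)
      (ω (Fin.cons c J))) (fderiv ℂ (pullbackIntegral (dilation lam)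
        (quasiDegree lam J + lam c - 1) (ω (Fin.cons c J))) x) x := fun c =>
    (hasFDerivAt_pullbackIntegral (continuous_dilation lam) (norm_dilation_le_one lam)
      _ (hω _) hx).differentiableAt.hasFDerivAt
  have hsum : HasFDerivAt (homotopyCoeff lam ω J) (∑ c, (((lam c : ℂ) * x c) •
      fderiv ℂ (pullbackIntegral (dilation lam) (quasiDegree lam J + lam c - 1)
        (ω (Fin.cons c J))) x + pullbackIntegral (dilation lam) (quasiDegree lam J + lam c - 1)
          (ω (Fin.cons c J)) x • (lam c : ℂ) • ContinuousLinearMap.proj c)) x :=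
    HasFDerivAt.fun_sum fun c _ =>
      ((ContinuousLinearMap.proj c).hasFDerivAt.const_mul (lam c : ℂ)).mul (hP c)
  rw [hsum.fderiv]
  simp only [Finset.sum_add_distrib, add_apply, sum_apply, smul_apply,
    fderiv_pullbackIntegral_dilation_single lam _ (hω _) hx, smul_eq_mul,
    ContinuousLinearMap.proj_apply, Pi.single_apply, mul_ite, mul_one, mul_zero,
    Finset.sum_ite_eq', Finset.mem_univ, if_true]
  ring

lemma quasiDegree_succAbove_add (lam : Fin m → ℕ) {q : ℕ} (K : Fin (q + 1) → Fin m)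
    (i : Fin (q + 1)) : quasiDegree lam (K ∘ i.succAbove) + lam (K i) = quasiDegree lam K := by
  rw [quasiDegree, quasiDegree, Fin.sum_univ_succAbove _ i, add_comm]
  rfl

/-- By alternation the terms with `c = K i` add up to `quasiDegree K · ∫₀¹ tⁿ ω_K(Φₜ x) dt`, by
closedness the remaining ones to the `∂_c ω_K` terms of the Euler identity. -/
theorem coe_apply_eq_sum_fderiv_homotopyCoeff {lam : Fin m → ℕ} (hlam : ∀ i, 0 < lam i) {q : ℕ}
    {ω : Form m (q + 1)} (hAlt : IsAlt ω) {R : ℝ}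
    (hω : ∀ L, AnalyticOnNhd ℂ (ω L : Cm m → ℂ) (ball 0 R))
    (hclosed : ∀ L, ∀ y ∈ ball 0 R, (extD ω L : Cm m → ℂ) y = 0)
    (K : Fin (q + 1) → Fin m) {x : Cm m} (hx : x ∈ ball 0 R) :
    (ω K : Cm m → ℂ) x = ∑ i : Fin (q + 1), (-1 : ℂ) ^ (i : ℕ) *
      fderiv ℂ (homotopyCoeff lam ω (K ∘ i.succAbove)) x (Pi.single (K i) 1) := by
  obtain ⟨n, hn⟩ : ∃ n, quasiDegree lam K = n + 1 :=
    ⟨quasiDegree lam K - 1, by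
      have := (quasiDegree_succAbove_add lam K 0).symm; have := hlam (K 0); omega⟩
  have hdeg := fun i => (quasiDegree_succAbove_add lam K i).trans hn
  have hsign : ∀ i : Fin (q + 1), ((-1 : ℂ) ^ (i : ℕ)) * (-1) ^ (i : ℕ) = 1 := fun i => by
    rw [← mul_pow, neg_one_mul, neg_neg, one_pow]
  have halt : ∀ i : Fin (q + 1), (lam (K i) : ℂ) * pullbackIntegral (dilation lam)
      (quasiDegree lam (K ∘ i.succAbove) + lam (K i) - 1) (ω (Fin.cons (K i) (K ∘ i.succAbove))) x
      = (-1) ^ (i : ℕ) * ((lam (K i) : ℂ) * pullbackIntegral (dilation lam) n (ω K) x) := by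
    intro i
    rw [hdeg i, Nat.add_sub_cancel, hAlt.cons_succAbove, coe_smul_eq_fun_mul,
      pullbackIntegral_const_mul]
    ring
  have hcross : ∀ c, pullbackIntegral (dilation lam) (n + lam c)
      (fun y => fderiv ℂ (ω K : Cm m → ℂ) y (Pi.single c 1)) x =
      ∑ i : Fin (q + 1), (-1 : ℂ) ^ (i : ℕ) * pullbackIntegral (dilation lam)
        (quasiDegree lam (K ∘ i.succAbove) + lam c - 1 + lam (K i))
        (fun y => fderiv ℂ (ω (Fin.cons c (K ∘ i.succAbove)) : Cm m → ℂ) y (Pi.single (K i) 1))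
        x := by
    intro c
    have hexp : ∀ i, quasiDegree lam (K ∘ i.succAbove) + lam c - 1 + lam (K i) = n + lam c :=
      fun i => by have := hdeg i; have := hlam c; omega
    simp only [hexp]
    exact pullbackIntegral_fderiv_eq_sum_of_extD_eq_zero lam hω hclosed K c _ hx
  rw [eq_pullbackIntegral_dilation_euler lam n (hω K) hx]
  simp only [fderiv_homotopyCoeff_single lam hω _ hx, halt, hcross, Finset.mul_sum]
  have hdegC : (n + 1 : ℂ) = ∑ i, (lam (K i) : ℂ) := by exact_mod_cast hn.symm
  rw [hdegC, Finset.sum_mul, Finset.sum_comm, ← Finset.sum_add_distrib]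
  refine Finset.sum_congr rfl fun i _ => ?_
  rw [mul_add, ← mul_assoc, hsign, one_mul, Finset.mul_sum]
  congr 1
  refine Finset.sum_congr rfl fun c _ => ?_
  ring

def pullbackIntegralGerm (lam : Fin m → ℕ) (a : ℕ) (g : O m) : O m :=
  ⟨pullbackIntegral (dilation lam) a g, analyticAt_pullbackIntegral (continuous_dilation lam)
    (norm_dilation_le_one lam) a g.2⟩

lemma pullbackIntegral_sum_mul_of_quasiHomogeneous {lam : Fin m → ℕ} {k : ℕ}
    {f g : Fin k → Cm m → ℂ} {δ : Fin k → ℕ}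
    (hf : ∀ i (t : ℝ) x, f i (dilation lam t x) = (t : ℂ) ^ δ i * f i x) {R : ℝ}
    (hg : ∀ i, ContinuousOn (g i) (ball 0 R)) (a : ℕ) {x : Cm m} (hx : x ∈ ball 0 R) :
    pullbackIntegral (dilation lam) a (fun y => ∑ i, g i y * f i y) x =
      ∑ i, f i x * pullbackIntegral (dilation lam) (a + δ i) (g i) x := by
  have hint := fun i => intervalIntegrable_pow_mul_comp (continuous_dilation lam)
    (norm_dilation_le_one lam) (hg i) hx (a + δ i)
  rw [pullbackIntegral, intervalIntegral.integral_congr (g := fun t : ℝ => ∑ i, f i x *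
    ((t : ℂ) ^ (a + δ i) * g i (dilation lam t x))) fun t _ => ?_,
    intervalIntegral.integral_finsetSum fun i _ => (hint i).const_mul _]
  · simp only [intervalIntegral.integral_const_mul, pullbackIntegral]
  · simp only [Finset.mul_sum, hf, pow_add]
    refine Finset.sum_congr rfl fun i _ => ?_
    ring

/-- `homotopyCoeff` with each generator `fᵢ` taken out of the integrals. It lies in `I·Λ` by
construction, but equals `homotopyCoeff` only where all integrands are continuous. -/
def idealHomotopy (lam : Fin m → ℕ) {k q : ℕ} (f : Fin k → O m) (δ : Fin k → ℕ)
    (g : (Fin (q + 1) → Fin m) → Fin k → O m) : Form m q := fun J =>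
  ∑ c, ∑ i, f i * ((lam c : ℂ) • coordO m c *
    pullbackIntegralGerm lam (quasiDegree lam J + lam c - 1 + δ i) (g (Fin.cons c J) i))

lemma memIF_idealHomotopy (lam : Fin m → ℕ) {k q : ℕ} (f : Fin k → O m) (δ : Fin k → ℕ)
    (g : (Fin (q + 1) → Fin m) → Fin k → O m) :
    memIF (Ideal.span (Set.range f)) (idealHomotopy lam f δ g) := fun _ =>
  Ideal.sum_mem _ fun _ _ => Ideal.sum_mem _ fun i _ =>
    Ideal.mul_mem_right _ _ (Ideal.subset_span (Set.mem_range_self i))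

lemma eqOn_idealHomotopy {lam : Fin m → ℕ} {k q : ℕ} {f : Fin k → O m} {δ : Fin k → ℕ}
    (hf : ∀ i (t : ℝ) x, (f i : Cm m → ℂ) (dilation lam t x) = (t : ℂ) ^ δ i * (f i : Cm m → ℂ) x)
    {ω : Form m (q + 1)} {g : (Fin (q + 1) → Fin m) → Fin k → O m}
    (hg : ∀ L, ∑ i, g L i * f i = ω L) {R : ℝ}
    (hgR : ∀ L i, ContinuousOn (g L i : Cm m → ℂ) (ball 0 R)) (J : Fin q → Fin m) :
    EqOn (idealHomotopy lam f δ g J : Cm m → ℂ) (homotopyCoeff lam ω J) (ball 0 R) := by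
  intro x hx
  have hcoe : ∀ L, (ω L : Cm m → ℂ) = fun y => ∑ i, (g L i : Cm m → ℂ) y * (f i : Cm m → ℂ) y :=
    fun L => by
      ext y
      simp [← hg L]
  simp only [homotopyCoeff, hcoe, pullbackIntegral_sum_mul_of_quasiHomogeneous hf (hgR _) _ hx]
  simp only [idealHomotopy, pullbackIntegralGerm, coordO, AddSubmonoidClass.coe_finsetSum,
    Finset.sum_apply, Finset.mul_sum]
  refine Finset.sum_congr rfl fun c _ => Finset.sum_congr rfl fun i _ => ?_
  change (f i : Cm m → ℂ) x * ((lam c : ℂ) * x c * _) = _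
  ring

end RelativePoincare

/-- relative Poincaré lemma for finitely generated quasi-homogeneous
ideals: a closed `p`-form in `I·Λ^p` is the differential of a `(p-1)`-form in
`I·Λ^{p-1}`. -/
theorem statement_1 (m p k : ℕ) (lam : Fin m → ℕ) (hlam : ∀ i, 0 < lam i)
    (f : Fin k → O m) (δ : Fin k → ℕ)
    (hqh : ∀ (i : Fin k) (t : ℂ) (x : Cm m),
      (f i : Cm m → ℂ) (fun j => t ^ lam j * x j) = t ^ δ i * (f i : Cm m → ℂ) x)
    (I : Ideal (O m)) (hI : I = Ideal.span (Set.range f))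
    (ω : Form m (p + 1)) (hAlt : IsAlt ω)
    (hmem : memIF I ω) (hclosed : FormEq (extD ω) 0) :
    ∃ α : Form m p, memIF I α ∧ FormEq ω (extD α) := by
  subst hI
  choose g hg using fun L => (Submodule.mem_span_range_iff_exists_fun (O m)).mp (hmem L)
  obtain ⟨R, hR, hball⟩ := Metric.eventually_nhds_iff_ball.mp <|
    (Filter.eventually_all.mpr fun L => (ω L).2.eventually_analyticAt).and <|
      (Filter.eventually_all.mpr fun L => Filter.eventually_all.mpr fun i =>
        (g L i).2.eventually_analyticAt).and <|
      Filter.eventually_all.mpr fun L => hclosed L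
  have hα := eqOn_idealHomotopy (lam := lam) (δ := δ) (fun i t x => hqh i t x) hg
    (fun L i y hy => ((hball y hy).2.1 L i).continuousAt.continuousWithinAt)
  refine ⟨idealHomotopy lam f δ g, memIF_idealHomotopy lam f δ g, fun K => ?_⟩
  filter_upwards [Metric.ball_mem_nhds 0 hR] with x hx
  rw [coe_apply_eq_sum_fderiv_homotopyCoeff hlam hAlt (fun L y hy => (hball y hy).1 L)
    (fun L y hy => (hball y hy).2.2 L) K hx, coe_extD_apply]
  refine Finset.sum_congr rfl fun i _ => ?_
  rw [((hα _).symm.eventuallyEq_of_mem (Metric.isOpen_ball.mem_nhds hx)).fderiv_eq]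
end
end

section
/- Every germ of a closed 2-form ω on (C²,0) has algebraic restriction to the ideal J = ⟨y², z⁴⟩ of the form [ω]_J = A·[dy∧dz]_J + B·[z·dy∧dz]_J + C·[z²·dy∧dz]_J for some complex constants A, B, C; i.e., ω − (A + Bz + Cz²) dy∧dz lies in A²₀(J, C²). -/
open Filter Topology

set_option maxHeartbeats 1000000
set_option synthInstance.maxHeartbeats 400000

noncomputable section

/-! On `ℂ²` an alternating 2-form is `F dy∧dz`. Hadamard's lemma in `y` (twice) and Taylor's formula
in `z` give `F = c₀ + c₁z + c₂z² + c₃z³ + z⁴k(z) + y h(z) + y²g(y,z)`. The terms `z⁴k` and `y²g` lie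
in `J`, while `c₃z³ dy∧dz = d(-c₃z⁴/4 dy)` and `y h(z) dy∧dz = d(y²h(z)/2 dz)` are differentials of
1-forms with coefficients in `J`. -/

namespace FormalMultilinearSeries

variable {𝕜 E F : Type*} [NontriviallyNormedField 𝕜] [NormedAddCommGroup E] [NormedSpace 𝕜 E]
  [NormedAddCommGroup F] [NormedSpace 𝕜 F]

/-- Telescoping `p (m+1) (x,…,x) - p (m+1) (Lx,…,Lx)` changes one slot at a time; the `i`-th
difference has `x - L x` in slot `i`, `x` before it and `L x` after it. -/
def hadamardSeries (p : FormalMultilinearSeries 𝕜 E F) (L : E →L[𝕜] E) (v : E) :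
    FormalMultilinearSeries 𝕜 E F := fun m =>
  ∑ i : Fin (m + 1), ((p (m + 1)).curryMid i v).compContinuousLinearMap
    fun j => if i.succAbove j < i then ContinuousLinearMap.id 𝕜 E else L

theorem sub_eq_smul_hadamardSeries (p : FormalMultilinearSeries 𝕜 E F) (L : E →L[𝕜] E)
    {v x : E} {c : 𝕜} (hx : x - L x = c • v) (m : ℕ) :
    p (m + 1) (fun _ => x) - p (m + 1) (fun _ => L x) = c • p.hadamardSeries L v m fun _ => x := by
  have := (p (m + 1)).toMultilinearMap.map_sub_map_piecewise (fun _ => x) (fun _ => L x)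
    Finset.univ
  simp only [Finset.piecewise_univ, Finset.mem_univ, true_imp_iff,
    ContinuousMultilinearMap.coe_coe] at this
  rw [this, hadamardSeries, sum_apply, Finset.smul_sum]
  refine Finset.sum_congr rfl fun i _ => ?_
  rw [ContinuousMultilinearMap.compContinuousLinearMap_apply,
    ContinuousMultilinearMap.curryMid_apply, hx, ← ContinuousMultilinearMap.coe_coe,
    ← MultilinearMap.map_insertNth_smul]
  congr 1
  ext j
  refine Fin.succAboveCases i ?_ (fun k => ?_) j
  · simp
  · have hne : i ≠ i.succAbove k := (Fin.succAbove_ne i k).symm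
    by_cases h : i.succAbove k < i <;> simp [h, hne]

theorem norm_hadamardSeries_le (p : FormalMultilinearSeries 𝕜 E F) (L : E →L[𝕜] E) (v : E)
    (m : ℕ) : ‖p.hadamardSeries L v m‖ ≤ (m + 1) * (‖p (m + 1)‖ * ‖v‖ * (‖L‖ + 1) ^ m) := by
  calc ‖p.hadamardSeries L v m‖
      ≤ ∑ _i : Fin (m + 1), ‖p (m + 1)‖ * ‖v‖ * (‖L‖ + 1) ^ m := by
        refine (norm_sum_le _ _).trans (Finset.sum_le_sum fun i _ => ?_)
        refine (ContinuousMultilinearMap.norm_compContinuousLinearMap_le _ _).trans ?_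
        gcongr
        · exact ((p (m + 1)).curryMid i).le_of_opNorm_le
            (ContinuousMultilinearMap.norm_curryMid _ _).le v
        · refine (Finset.prod_le_prod (fun _ _ => norm_nonneg _) fun j _ => ?_).trans_eq
            (Fin.prod_const m _)
          split_ifs
          · exact ContinuousLinearMap.norm_id_le.trans (le_add_of_nonneg_left (norm_nonneg L))
          · exact le_add_of_nonneg_right zero_le_one
    _ = (m + 1) * (‖p (m + 1)‖ * ‖v‖ * (‖L‖ + 1) ^ m) := by simp

theorem radius_hadamardSeries_pos (p : FormalMultilinearSeries 𝕜 E F) (L : E →L[𝕜] E) (v : E)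
    (hp : 0 < p.radius) : 0 < (p.hadamardSeries L v).radius := by
  obtain ⟨r, hr₀, hrp⟩ := ENNReal.lt_iff_exists_nnreal_btwn.mp hp
  obtain ⟨C, -, hC⟩ := p.norm_mul_pow_le_of_lt_radius hrp
  set s : NNReal := r / (2 * (‖L‖₊ + 1))
  have hr : 0 < r := by exact_mod_cast hr₀
  have hs0 : 0 < s := by positivity
  have hs : (s : ℝ) = r / (2 * (‖L‖ + 1)) := by simp [s]
  refine lt_of_lt_of_le (by exact_mod_cast hs0) (le_radius_of_bound _ (C * ‖v‖ / r) fun m => ?_)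
  have hm : ((m : ℝ) + 1) ≤ 2 ^ m := by exact_mod_cast Nat.lt_two_pow_self
  calc ‖p.hadamardSeries L v m‖ * (s : ℝ) ^ m
      ≤ (m + 1) * (‖p (m + 1)‖ * ‖v‖ * (‖L‖ + 1) ^ m) * (s : ℝ) ^ m := by
        gcongr; exact norm_hadamardSeries_le p L v m
    _ = ((m + 1) / 2 ^ m) * (‖p (m + 1)‖ * r ^ (m + 1)) * ‖v‖ / r := by
        rw [hs, div_pow, mul_pow]
        field_simp
        ring
    _ ≤ 1 * C * ‖v‖ / r := by
        gcongr
        · exact (div_le_one (by positivity)).2 hm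
        · exact hC (m + 1)
    _ = C * ‖v‖ / r := by ring

end FormalMultilinearSeries

section Analytic

variable {𝕜 E F : Type*} [NontriviallyNormedField 𝕜] [NormedAddCommGroup E] [NormedSpace 𝕜 E]
  [NormedAddCommGroup F] [NormedSpace 𝕜 F]

theorem AnalyticAt.exists_eq_sub_smul_add_smul [CompleteSpace F] {f : E → F}
    (hf : AnalyticAt 𝕜 f 0) (ℓ : E →L[𝕜] 𝕜) (v : E) :
    ∃ g : E → F, AnalyticAt 𝕜 g 0 ∧ ∀ᶠ x in 𝓝 0, f x = f (x - ℓ x • v) + ℓ x • g x := by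
  obtain ⟨p, r, hfp⟩ := hf
  set L : E →L[𝕜] E := ContinuousLinearMap.id 𝕜 E - ℓ.smulRight v
  have hL : ∀ x, L x = x - ℓ x • v := fun x => by simp [L]
  set q := p.hadamardSeries L v
  have hq := q.hasFPowerSeriesOnBall (p.radius_hadamardSeries_pos L v hfp.radius_pos)
  refine ⟨q.sum, hq.analyticAt, ?_⟩
  have hLx : ∀ᶠ x in 𝓝 (0 : E), L x ∈ Metric.eball (0 : E) r :=
    (L.continuous.tendsto' 0 0 (map_zero L)).eventually (Metric.eball_mem_nhds 0 hfp.r_pos)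
  filter_upwards [Metric.eball_mem_nhds (0 : E) hfp.r_pos, hLx,
    Metric.eball_mem_nhds (0 : E) hq.r_pos] with x hx hLx hqx
  have hsub : HasSum (fun n => p (n + 1) (fun _ => x) - p (n + 1) (fun _ => L x))
      (f x - f (L x)) := by
    have h0 : (p 0 fun _ => x) = p 0 fun _ => L x := congrArg (p 0) (Subsingleton.elim _ _)
    have := (hasSum_nat_add_iff' 1).2 ((hfp.hasSum hx).sub (hfp.hasSum hLx))
    simpa [h0] using this
  have hsmul : HasSum (fun n => p (n + 1) (fun _ => x) - p (n + 1) (fun _ => L x))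
      (ℓ x • q.sum x) := by
    simp only [p.sub_eq_smul_hadamardSeries L (x := x) (v := v) (c := ℓ x)
      (by rw [hL, sub_sub_cancel])]
    simpa using (hq.hasSum hqx).const_smul (ℓ x)
  rw [← hsub.unique hsmul, hL, add_sub_cancel]

theorem AnalyticAt.dslope {f : 𝕜 → F} {a : 𝕜} (hf : AnalyticAt 𝕜 f a) :
    AnalyticAt 𝕜 (dslope f a) a := by
  obtain ⟨p, hp⟩ := hf
  exact ⟨_, hp.has_fpower_series_dslope_fslope⟩

theorem AnalyticAt.exists_eq_sum_add_pow_smul {f : 𝕜 → F} (hf : AnalyticAt 𝕜 f 0) (n : ℕ) :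
    ∃ (c : ℕ → F) (g : 𝕜 → F), AnalyticAt 𝕜 g 0 ∧
      ∀ t, f t = ∑ i ∈ Finset.range n, t ^ i • c i + t ^ n • g t := by
  induction n generalizing f with
  | zero => exact ⟨0, f, hf, fun t => by simp⟩
  | succ n ih =>
    obtain ⟨c, g, hg, hfg⟩ := ih hf.dslope
    refine ⟨fun i => Nat.casesOn i (f 0) c, g, hg, fun t => ?_⟩
    have := sub_smul_dslope f 0 t
    rw [sub_zero, hfg, smul_add, Finset.smul_sum] at this
    rw [Finset.sum_range_succ', ← sub_add_cancel (f t) (f 0), ← this]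
    simp only [pow_succ', mul_smul, pow_zero, one_smul]
    abel

end Analytic

theorem fin_two_sub_smul_single_zero (x : Cm 2) :
    x - x 0 • Pi.single 0 1 = x 1 • Pi.single 1 1 := by
  ext i; fin_cases i <;> simp

def zGerm (w : ℂ → ℂ) (hw : AnalyticAt ℂ w 0) : O 2 :=
  ⟨fun x => w (x 1), hw.comp_of_eq (coord_analyticAt 2 1 0) rfl⟩

theorem AnalyticAt.exists_yz_expansion {F : Cm 2 → ℂ} (hF : AnalyticAt ℂ F 0) :
    ∃ (c : ℕ → ℂ) (k h : ℂ → ℂ) (g : Cm 2 → ℂ),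
      AnalyticAt ℂ k 0 ∧ AnalyticAt ℂ h 0 ∧ AnalyticAt ℂ g 0 ∧
      ∀ᶠ x in 𝓝 0, F x = ∑ i ∈ Finset.range 4, x 1 ^ i * c i + x 1 ^ 4 * k (x 1)
        + x 0 * h (x 1) + x 0 ^ 2 * g x := by
  have hline : AnalyticAt ℂ (fun t : ℂ => t • (Pi.single 1 1 : Cm 2)) 0 :=
    analyticAt_id.smul analyticAt_const
  obtain ⟨h₁, hh₁, hFh₁⟩ := hF.exists_eq_sub_smul_add_smul (.proj 0) (Pi.single 0 1)
  obtain ⟨g, hg, hh₁g⟩ := hh₁.exists_eq_sub_smul_add_smul (.proj 0) (Pi.single 0 1)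
  obtain ⟨c, k, hk, hFk⟩ := (hF.comp_of_eq hline (zero_smul _ _)).exists_eq_sum_add_pow_smul 4
  refine ⟨c, k, fun t => h₁ (t • Pi.single 1 1), g, hk, hh₁.comp_of_eq hline (zero_smul _ _),
    hg, ?_⟩
  filter_upwards [hFh₁, hh₁g] with x hFx hh₁x
  simp only [ContinuousLinearMap.proj_apply, fin_two_sub_smul_single_zero, smul_eq_mul] at hFx hh₁x
  have hFkx := hFk (x 1)
  simp only [Function.comp_apply, smul_eq_mul] at hFkx
  rw [hFx, hh₁x, hFkx]
  ring

theorem pd_smul {m : ℕ} (i : Fin m) (c : ℂ) (f : O m) : pd i (c • f) = c • pd i f :=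
  Subtype.ext <| funext fun x => by
    simp only [pd, Subalgebra.coe_smul, fderiv_const_smul_field]
    rfl

theorem pd_one_Z_pow (n : ℕ) (x : Cm 2) : (pd 1 (Z ^ n) : Cm 2 → ℂ) x = n * x 1 ^ (n - 1) := by
  have h := ((hasFDerivAt_apply (𝕜 := ℂ) (F' := fun _ : Fin 2 => ℂ) 1 x).pow n)
  show fderiv ℂ (fun x : Cm 2 => x 1 ^ n) x (Pi.single 1 1) = _
  rw [h.fderiv]
  simp

theorem pd_zero_Y_sq_mul_zGerm {h : ℂ → ℂ} (hh : AnalyticAt ℂ h 0) :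
    ∀ᶠ x in 𝓝 (0 : Cm 2), (pd 0 (Y ^ 2 * zGerm h hh) : Cm 2 → ℂ) x = 2 * x 0 * h (x 1) := by
  have hz : Tendsto (fun x : Cm 2 => x 1) (𝓝 0) (𝓝 0) := (continuous_apply 1).tendsto' 0 0 rfl
  filter_upwards [hz.eventually hh.eventually_analyticAt] with x hx
  have h₀ := (hasFDerivAt_apply (𝕜 := ℂ) (F' := fun _ : Fin 2 => ℂ) 0 x).pow 2
  have h₁ := hx.differentiableAt.hasDerivAt.comp_hasFDerivAt x
    (hasFDerivAt_apply (𝕜 := ℂ) (F' := fun _ : Fin 2 => ℂ) 1 x)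
  show fderiv ℂ (fun x : Cm 2 => x 0 ^ 2 * h (x 1)) x (Pi.single 0 1) = _
  rw [HasFDerivAt.fderiv (f := fun x : Cm 2 => x 0 ^ 2 * h (x 1)) (h₀.mul h₁)]
  simp [mul_comm]

theorem IsAlt.eq_twoF {ω : Form 2 2} (hω : IsAlt ω) : ω = twoF (ω ![0, 1]) := by
  have hswap : ω ![1, 0] = -ω ![0, 1] := by
    have h := hω.2 ![0, 1] (Equiv.swap 0 1)
    rw [Equiv.Perm.sign_swap (by decide)] at h
    have hJ : ![0, 1] ∘ Equiv.swap (0 : Fin 2) 1 = ![1, 0] := by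
      ext i; fin_cases i <;> rfl
    simpa [hJ] using h
  funext J
  have hJ : J = ![J 0, J 1] := by ext i; fin_cases i <;> rfl
  rw [hJ]
  have hdiag : ∀ a : Fin 2, ω ![a, a] = 0 := fun a =>
    hω.1 _ fun hinj => absurd (hinj (show ![a, a] 0 = ![a, a] 1 from rfl)) (by decide)
  generalize J 0 = a, J 1 = b
  fin_cases a <;> fin_cases b <;> simp [twoF, hdiag, hswap]

theorem twoF_sub (f g : O 2) : twoF f - twoF g = twoF (f - g) := by
  funext J
  simp only [twoF, Pi.sub_apply]
  split_ifs <;> abel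

theorem extD_oneF (u v : O 2) : extD (oneF u v) = twoF (pd 0 v - pd 1 u) := by
  funext J
  have hJ : J = ![J 0, J 1] := by ext i; fin_cases i <;> rfl
  rw [hJ]
  generalize J 0 = a, J 1 = b
  fin_cases a <;> fin_cases b <;>
    simp [extD, oneF, twoF, Fin.sum_univ_two, Fin.succAbove, sub_eq_add_neg]

theorem zeroAR_twoF {I : Ideal (O 2)} {f e u v : O 2} (he : e ∈ I) (hu : u ∈ I) (hv : v ∈ I)
    (hf : (f : Cm 2 → ℂ) =ᶠ[𝓝 0] (e + (pd 0 v - pd 1 u) : O 2)) : ZeroAR I (twoF f) := by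
  refine ⟨twoF e, oneF u v, fun J => ?_, fun J => ?_, fun J => ?_⟩
  · simp only [twoF]
    split_ifs
    exacts [he, I.neg_mem he, I.zero_mem]
  · simp only [oneF]
    split_ifs
    exacts [hu, hv]
  · show _ =ᶠ[𝓝 0] ((twoF e + extD (oneF u v)) J : Cm 2 → ℂ)
    rw [extD_oneF]
    simp only [twoF, Pi.add_apply]
    split_ifs
    · exact hf
    · filter_upwards [hf] with x hx
      simp [hx, add_comm]
    · simp

theorem statement_8_general (ω : Form 2 2) (hAlt : IsAlt ω) :
    ∃ A B C : ℂ,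
      ZeroAR (Ideal.span {Y ^ 2, Z ^ 4})
        (ω - twoF (A • 1 + B • Z + C • Z ^ 2)) := by
  obtain ⟨c, k, h, g, hk, hh, hg, hω⟩ := (ω ![0, 1]).2.exists_yz_expansion
  have hY : Y ^ 2 ∈ Ideal.span {Y ^ 2, Z ^ 4} := Ideal.subset_span (by simp)
  have hZ : Z ^ 4 ∈ Ideal.span {Y ^ 2, Z ^ 4} := Ideal.subset_span (by simp)
  refine ⟨c 0, c 1, c 2, ?_⟩
  rw [hAlt.eq_twoF, twoF_sub]
  refine zeroAR_twoF (e := Y ^ 2 * ⟨g, hg⟩ + Z ^ 4 * zGerm k hk)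
    (u := (-(c 3 / 4)) • Z ^ 4) (v := (2⁻¹ : ℂ) • (Y ^ 2 * zGerm h hh))
    (add_mem (Ideal.mul_mem_right _ _ hY) (Ideal.mul_mem_right _ _ hZ))
    (Submodule.smul_of_tower_mem _ _ hZ)
    (Submodule.smul_of_tower_mem _ _ (Ideal.mul_mem_right _ _ hY)) ?_
  filter_upwards [hω, pd_zero_Y_sq_mul_zGerm hh] with x hωx hpdx
  simp only [pd_smul, Subalgebra.coe_add, Subalgebra.coe_sub, Subalgebra.coe_smul, Pi.add_apply,
    Pi.sub_apply, Pi.smul_apply, hpdx, pd_one_Z_pow]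
  simp only [Finset.sum_range_succ, Finset.range_one, Finset.sum_singleton, pow_zero, one_mul,
    pow_one, OneMemClass.coe_one, Pi.one_apply, smul_eq_mul, mul_one, Z, coordO,
    SubmonoidClass.coe_pow, Pi.pow_apply, Y, MulMemClass.coe_mul, Pi.mul_apply, zGerm,
    Nat.cast_ofNat, Nat.add_one_sub_one, neg_mul, sub_neg_eq_add] at hωx ⊢
  linear_combination hωx

/-- every closed 2-form germ on `(ℂ²,0)` has algebraic restriction
to `J = ⟨y², z⁴⟩` of the form `A[dy∧dz] + B[z dy∧dz] + C[z² dy∧dz]`. -/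
theorem statement_8 (ω : Form 2 2) (hAlt : IsAlt ω) (hclosed : FormEq (extD ω) 0) :
    ∃ A B C : ℂ,
      ZeroAR (Ideal.span {Y ^ 2, Z ^ 4})
        (ω - twoF (A • 1 + B • Z + C • Z ^ 2)) :=
  statement_8_general ω hAlt
end
end
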